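/- Let μ be a Borel probability measure on ℝ and let β be a countable Borel partition of ℝ with finite Shannon entropy H_μ(β) = −∑_{A∈β} μ(A) log μ(A) < ∞. For x ∈ ℝ, let β(x) denote the atom of β containing x, and define g_*(x) = inf { μ(β(x) ∩ I)/μ(I) : I an open interval, x ∈ I, μ(I) > 0 }. Then ∫ −log g_*(x) dμ(x) ≤ H_μ(β) + log 2 + 1. -/

import Mathlib

/-!
On an atom `A` the function `g_*` is the minimal function `(1_A)_*`, whose level set
`{(1_A)_* < λ}` is a union of open intervals `I` with `μ (A ∩ I) ≤ λ μ I`. Finitely many intervals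
can be thinned to a subfamily with the same union in which no point lies in three members, so by
inner regularity `μ (A ∩ {(1_A)_* < λ}) ≤ min (μ A) (2λ)`. The layer-cake formula then bounds
`∫_A -log g_*` by `∫₀^∞ min (μ A) (2e^{-t}) dt = μ A (log 2 + 1) - μ A log (μ A)`, and summing
over the atoms gives `H_μ(β) + log 2 + 1`.
-/

open MeasureTheory Set Finset Real
open scoped ENNReal

namespace Set.OrdConnected

variable {α : Type*} [LinearOrder α] {I J : Set α} {x y z : α}

theorem lt_and_lt_or_lt_and_lt_of_mem_diff (hI : I.OrdConnected) (hJ : J.OrdConnected)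
    (hxI : x ∈ I) (hxJ : x ∈ J) (hy : y ∈ I \ J) (hz : z ∈ J \ I) :
    (y < x ∧ x < z) ∨ (z < x ∧ x < y) := by
  have hyx : y ≠ x := ne_of_mem_of_not_mem hxJ hy.2 |>.symm
  have hzx : z ≠ x := ne_of_mem_of_not_mem hxI hz.2 |>.symm
  rcases le_total y x with hyx' | hxy <;> rcases le_total z x with hzx' | hxz
  · exfalso
    rcases le_total y z with h | h
    · exact hz.2 (hI.out hy.1 hxI ⟨h, hzx'⟩)
    · exact hy.2 (hJ.out hz.1 hxJ ⟨h, hyx'⟩)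
  · exact .inl ⟨lt_of_le_of_ne hyx' hyx, lt_of_le_of_ne hxz hzx.symm⟩
  · exact .inr ⟨lt_of_le_of_ne hzx' hzx, lt_of_le_of_ne hxy hyx.symm⟩
  · exfalso
    rcases le_total y z with h | h
    · exact hy.2 (hJ.out hxJ hz.1 ⟨hxy, h⟩)
    · exact hz.2 (hI.out hxI hy.1 ⟨hxz, h⟩)

end Set.OrdConnected

theorem Finset.exists_mem_forall_notMem_of_minimal {α : Type*} {t : Finset (Set α)}
    (hmin : ∀ s ⊆ t, ⋃ J ∈ s, J = ⋃ J ∈ t, J → #t ≤ #s) {J : Set α} (hJ : J ∈ t) :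
    ∃ y ∈ J, ∀ J' ∈ t, J' ≠ J → y ∉ J' := by
  by_contra! h
  have hsub : J ⊆ ⋃ J' ∈ t.erase J, J' := fun y hy ↦ by
    obtain ⟨J', hJ', hne, hyJ'⟩ := h y hy
    exact Set.mem_biUnion (mem_erase.2 ⟨hne, hJ'⟩) hyJ'
  have hunion : ⋃ J' ∈ t.erase J, J' = ⋃ J' ∈ t, J' := by
    conv_rhs => rw [← insert_erase hJ, set_biUnion_insert, Set.union_eq_right.2 hsub]
  have := hmin _ (erase_subset J t) hunion
  have := card_erase_lt_of_mem hJ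
  omega

open scoped Classical in
theorem Finset.exists_subset_biUnion_eq_card_filter_mem_le_two {α : Type*} [LinearOrder α]
    (𝒥 : Finset (Set α)) (h𝒥 : ∀ J ∈ 𝒥, J.OrdConnected) :
    ∃ t ⊆ 𝒥, ⋃ J ∈ t, J = ⋃ J ∈ 𝒥, J ∧ ∀ x, #{J ∈ t | x ∈ J} ≤ 2 := by
  obtain ⟨t, ht, hmin⟩ := exists_min_image (𝒥.powerset.filter fun t ↦ ⋃ J ∈ t, J = ⋃ J ∈ 𝒥, J)
    card ⟨𝒥, by simp⟩
  simp only [mem_filter, mem_powerset] at ht hmin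
  obtain ⟨ht𝒥, htU⟩ := ht
  refine ⟨t, ht𝒥, htU, fun x ↦ ?_⟩
  by_contra! h3
  obtain ⟨J₁, J₂, J₃, h₁, h₂, h₃, h₁₂, h₁₃, h₂₃⟩ := two_lt_card_iff.1 h3
  simp only [mem_filter] at h₁ h₂ h₃
  have hpriv : ∀ J ∈ t, ∃ y ∈ J, ∀ J' ∈ t, J' ≠ J → y ∉ J' := fun J hJ ↦
    exists_mem_forall_notMem_of_minimal
      (fun s hs hsU ↦ hmin s ⟨hs.trans ht𝒥, hsU.trans htU⟩) hJ
  obtain ⟨y₁, hy₁, hy₁'⟩ := hpriv J₁ h₁.1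
  obtain ⟨y₂, hy₂, hy₂'⟩ := hpriv J₂ h₂.1
  obtain ⟨y₃, hy₃, hy₃'⟩ := hpriv J₃ h₃.1
  have ho : ∀ J ∈ t, J.OrdConnected := fun J hJ ↦ h𝒥 J (ht𝒥 hJ)
  -- of three points each private to an interval through `x`, two lie on the same side of `x`
  rcases (ho _ h₁.1).lt_and_lt_or_lt_and_lt_of_mem_diff (ho _ h₂.1) h₁.2 h₂.2
      ⟨hy₁, hy₁' _ h₂.1 h₁₂.symm⟩ ⟨hy₂, hy₂' _ h₁.1 h₁₂⟩ with h | h <;>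
  rcases (ho _ h₁.1).lt_and_lt_or_lt_and_lt_of_mem_diff (ho _ h₃.1) h₁.2 h₃.2
      ⟨hy₁, hy₁' _ h₃.1 h₁₃.symm⟩ ⟨hy₃, hy₃' _ h₁.1 h₁₃⟩ with h' | h' <;>
  rcases (ho _ h₂.1).lt_and_lt_or_lt_and_lt_of_mem_diff (ho _ h₃.1) h₂.2 h₃.2
      ⟨hy₂, hy₂' _ h₃.1 h₂₃.symm⟩ ⟨hy₃, hy₃' _ h₂.1 h₂₃⟩ with h'' | h'' <;>
  order

open scoped Classical in
theorem MeasureTheory.sum_measure_le_of_card_filter_mem_le {α : Type*} [MeasurableSpace α]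
    (μ : Measure α) {t : Finset (Set α)} (ht : ∀ J ∈ t, MeasurableSet J) {n : ℕ}
    (hn : ∀ x, #{J ∈ t | x ∈ J} ≤ n) :
    ∑ J ∈ t, μ J ≤ n * μ univ := calc
  ∑ J ∈ t, μ J = ∫⁻ x, ∑ J ∈ t, J.indicator 1 x ∂μ := by
    rw [lintegral_finsetSum _ fun J hJ ↦ measurable_one.indicator (ht J hJ)]
    exact sum_congr rfl fun J hJ ↦ (lintegral_indicator_one (ht J hJ)).symm
  _ ≤ ∫⁻ _, (n : ENNReal) ∂μ := lintegral_mono fun x ↦ by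
    simp only [indicator_apply, Pi.one_apply, sum_boole]
    exact_mod_cast hn x
  _ = n * μ univ := lintegral_const _

theorem lintegral_Ioi_min_two_mul_exp_neg_le {a : ℝ} (ha : 0 < a) (ha2 : a ≤ 2) :
    ∫⁻ t in Ioi 0, min (ENNReal.ofReal a) (2 * ENNReal.ofReal (exp (-t))) ≤
      ENNReal.ofReal (a * (log 2 + 1) - a * log a) := by
  -- split at the crossover point `T`, where `2 * exp (-T) = a`
  set T := log 2 - log a with hT
  have hT0 : 0 ≤ T := sub_nonneg.2 (log_le_log ha ha2)
  have hexpT : 2 * exp (-T) = a := by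
    rw [hT, neg_sub, exp_sub, exp_log ha, exp_log two_pos]; field_simp
  have htail : ∫⁻ t in Ioi T, ENNReal.ofReal (exp (-t)) = ENNReal.ofReal (exp (-T)) := by
    rw [← ofReal_integral_eq_lintegral_ofReal
      (by simpa [IntegrableOn] using exp_neg_integrableOn_Ioi T one_pos)
      (ae_of_all _ fun t ↦ (exp_pos _).le), integral_exp_neg_Ioi]
  calc ∫⁻ t in Ioi 0, min (ENNReal.ofReal a) (2 * ENNReal.ofReal (exp (-t)))
      = (∫⁻ t in Ioc 0 T, min (ENNReal.ofReal a) (2 * ENNReal.ofReal (exp (-t)))) +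
          ∫⁻ t in Ioi T, min (ENNReal.ofReal a) (2 * ENNReal.ofReal (exp (-t))) := by
        rw [← lintegral_union measurableSet_Ioi (Ioc_disjoint_Ioi le_rfl),
          Ioc_union_Ioi_eq_Ioi hT0]
    _ ≤ (∫⁻ _ in Ioc 0 T, ENNReal.ofReal a) + ∫⁻ t in Ioi T, 2 * ENNReal.ofReal (exp (-t)) := by
        gcongr <;> simp
    _ = ENNReal.ofReal (a * T) + ENNReal.ofReal a := by
        rw [setLIntegral_const, volume_Ioc, sub_zero, lintegral_const_mul _ (by fun_prop), htail,
          ← ENNReal.ofReal_mul ha.le, ← hexpT, ENNReal.ofReal_mul zero_le_two]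
        simp
    _ = ENNReal.ofReal (a * (log 2 + 1) - a * log a) := by
        rw [← ENNReal.ofReal_add (mul_nonneg ha.le hT0) ha.le, hT]
        ring_nf

namespace MeasureTheory

section MinimalFunction

variable {α : Type*} [TopologicalSpace α] [LinearOrder α] [MeasurableSpace α]
  {μ : Measure α} {A : Set α} {x : α} {c : ℝ}

/-- The paper's `(1_A)_*`. Adjoining `1` encodes the convention `(1_A)_* x = 1` when no open
interval around `x` has positive measure, and keeps the infimum away from `sInf ∅ = 0`. -/
noncomputable def minimalFunction (μ : Measure α) (A : Set α) (x : α) : ℝ :=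
  sInf ({1} ∪ {r : ℝ | ∃ I : Set α, IsOpen I ∧ I.OrdConnected ∧ x ∈ I ∧ 0 < μ I ∧
    r = (μ (A ∩ I)).toReal / (μ I).toReal})

theorem nonneg_of_mem_minimalFunction_set {r : ℝ}
    (hr : r ∈ {1} ∪ {r : ℝ | ∃ I : Set α, IsOpen I ∧ I.OrdConnected ∧ x ∈ I ∧ 0 < μ I ∧
      r = (μ (A ∩ I)).toReal / (μ I).toReal}) : 0 ≤ r := by
  rcases hr with rfl | ⟨I, -, -, -, -, rfl⟩
  exacts [zero_le_one, by positivity]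

theorem minimalFunction_nonneg : 0 ≤ minimalFunction μ A x :=
  le_csInf ⟨1, .inl rfl⟩ fun _ ↦ nonneg_of_mem_minimalFunction_set

theorem minimalFunction_le_one : minimalFunction μ A x ≤ 1 :=
  csInf_le ⟨0, fun _ ↦ nonneg_of_mem_minimalFunction_set⟩ (.inl rfl)

theorem minimalFunction_lt_iff : minimalFunction μ A x < c ↔ 1 < c ∨ ∃ I : Set α, IsOpen I ∧
    I.OrdConnected ∧ x ∈ I ∧ 0 < μ I ∧ (μ (A ∩ I)).toReal / (μ I).toReal < c := by
  rw [minimalFunction, csInf_lt_iff ⟨0, fun _ ↦ nonneg_of_mem_minimalFunction_set⟩ ⟨1, .inl rfl⟩]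
  constructor
  · rintro ⟨r, rfl | ⟨I, hI, hIc, hxI, hμI, rfl⟩, hr⟩
    exacts [.inl hr, .inr ⟨I, hI, hIc, hxI, hμI, hr⟩]
  · rintro (hc | ⟨I, hI, hIc, hxI, hμI, hr⟩)
    exacts [⟨1, .inl rfl, hc⟩, ⟨_, .inr ⟨I, hI, hIc, hxI, hμI, rfl⟩, hr⟩]

theorem upperSemicontinuous_minimalFunction : UpperSemicontinuous (minimalFunction μ A) := by
  refine upperSemicontinuous_iff_isOpen_preimage.2 fun c ↦ isOpen_iff_forall_mem_open.2 ?_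
  intro x hx
  rcases minimalFunction_lt_iff.1 hx with hc | ⟨I, hI, hIc, hxI, hμI, hr⟩
  · exact ⟨univ, fun y _ ↦ minimalFunction_le_one.trans_lt hc, isOpen_univ, mem_univ x⟩
  · exact ⟨I, fun y hy ↦ minimalFunction_lt_iff.2 (.inr ⟨I, hI, hIc, hy, hμI, hr⟩), hI, hxI⟩

theorem setOf_minimalFunction_lt_subset [IsFiniteMeasure μ] :
    {x | minimalFunction μ A x < c} ⊆
      ⋃₀ {I | IsOpen I ∧ I.OrdConnected ∧ μ (A ∩ I) ≤ ENNReal.ofReal c * μ I} := by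
  intro x hx
  rcases minimalFunction_lt_iff.1 hx with hc | ⟨I, hI, hIc, hxI, hμI, hr⟩
  · refine ⟨univ, ⟨isOpen_univ, ordConnected_univ, ?_⟩, mem_univ x⟩
    calc μ (A ∩ univ) ≤ 1 * μ univ := by rw [one_mul]; exact measure_mono inter_subset_right
      _ ≤ ENNReal.ofReal c * μ univ := by gcongr; exact ENNReal.one_le_ofReal.2 hc.le
  · refine ⟨I, ⟨hI, hIc, ?_⟩, hxI⟩
    have hμI' : 0 < (μ I).toReal := ENNReal.toReal_pos hμI.ne' (measure_ne_top μ I)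
    rw [div_lt_iff₀ hμI'] at hr
    calc μ (A ∩ I) = ENNReal.ofReal (μ (A ∩ I)).toReal := (ENNReal.ofReal_toReal (by simp)).symm
      _ ≤ ENNReal.ofReal (c * (μ I).toReal) := ENNReal.ofReal_le_ofReal hr.le
      _ = ENNReal.ofReal c * μ I := by
        rw [ENNReal.ofReal_mul' ENNReal.toReal_nonneg, ENNReal.ofReal_toReal (by simp)]

end MinimalFunction


section Estimates

variable {α : Type*} [TopologicalSpace α] [LinearOrder α] [MeasurableSpace α]
  [OpensMeasurableSpace α] {μ : Measure α} {A : Set α} {l : ℝ≥0∞} {𝓘 : Set (Set α)}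

theorem IsCompact.measure_le_of_subset_sUnion_ordConnected {K : Set α} (hK : IsCompact K)
    (hKA : K ⊆ A) (hK𝓘 : K ⊆ ⋃₀ 𝓘)
    (h𝓘 : ∀ I ∈ 𝓘, IsOpen I ∧ I.OrdConnected ∧ μ (A ∩ I) ≤ l * μ I) :
    μ K ≤ 2 * l * μ univ := by
  obtain ⟨𝓙, h𝓙𝓘, h𝓙, hK𝓙⟩ := hK.elim_finite_subcover_image (c := id)
    (fun I hI ↦ (h𝓘 I hI).1) (sUnion_eq_biUnion ▸ hK𝓘)
  have hmem : ∀ J ∈ h𝓙.toFinset, J ∈ 𝓘 := fun J hJ ↦ h𝓙𝓘 (h𝓙.mem_toFinset.1 hJ)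
  obtain ⟨t, ht, htU, ht2⟩ := h𝓙.toFinset.exists_subset_biUnion_eq_card_filter_mem_le_two
    fun J hJ ↦ (h𝓘 J (hmem J hJ)).2.1
  have hKt : K ⊆ ⋃ J ∈ t, A ∩ J := by
    rw [← inter_iUnion₂, htU]
    exact subset_inter hKA (by simpa using hK𝓙)
  calc μ K ≤ ∑ J ∈ t, μ (A ∩ J) := (measure_mono hKt).trans (measure_biUnion_finset_le t _)
    _ ≤ ∑ J ∈ t, l * μ J := sum_le_sum fun J hJ ↦ (h𝓘 J (hmem J (ht hJ))).2.2
    _ = l * ∑ J ∈ t, μ J := (mul_sum ..).symm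
    _ ≤ l * (2 * μ univ) := by
      gcongr
      exact_mod_cast sum_measure_le_of_card_filter_mem_le μ
        (fun J hJ ↦ (h𝓘 J (hmem J (ht hJ))).1.measurableSet) ht2
    _ = 2 * l * μ univ := by ring

theorem measure_inter_sUnion_ordConnected_le [IsFiniteMeasure μ] [μ.InnerRegularCompactLTTop]
    (hA : MeasurableSet A) (h𝓘 : ∀ I ∈ 𝓘, IsOpen I ∧ I.OrdConnected ∧ μ (A ∩ I) ≤ l * μ I) :
    μ (A ∩ ⋃₀ 𝓘) ≤ 2 * l * μ univ := by
  refine ENNReal.le_of_forall_pos_le_add fun ε hε _ ↦ ?_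
  obtain ⟨K, hKsub, hK, hμK⟩ := (hA.inter (isOpen_sUnion fun I hI ↦ (h𝓘 I hI).1).measurableSet)
    |>.exists_isCompact_lt_add (measure_ne_top μ _) (ENNReal.coe_ne_zero.2 hε.ne')
  calc μ (A ∩ ⋃₀ 𝓘) ≤ μ K + ε := hμK.le
    _ ≤ 2 * l * μ univ + ε := by
      gcongr
      exact hK.measure_le_of_subset_sUnion_ordConnected (hKsub.trans inter_subset_left)
        (hKsub.trans inter_subset_right) h𝓘

theorem measure_inter_setOf_minimalFunction_lt_le [IsFiniteMeasure μ]
    [μ.InnerRegularCompactLTTop] (hA : MeasurableSet A) (c : ℝ) :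
    μ (A ∩ {x | minimalFunction μ A x < c}) ≤ 2 * ENNReal.ofReal c * μ univ :=
  (measure_mono (inter_subset_inter_right A setOf_minimalFunction_lt_subset)).trans
    (measure_inter_sUnion_ordConnected_le hA fun _ hI ↦ hI)

theorem setLIntegral_neg_log_minimalFunction_le [IsProbabilityMeasure μ]
    [μ.InnerRegularCompactLTTop] (hA : MeasurableSet A) :
    ∫⁻ x in A, ENNReal.ofReal (-log (minimalFunction μ A x)) ∂μ ≤
      ENNReal.ofReal ((μ A).toReal * (log 2 + 1) - (μ A).toReal * log (μ A).toReal) := by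
  rcases eq_or_ne (μ A) 0 with h0 | h0
  · simp [Measure.restrict_eq_zero.2 h0]
  have ha : 0 < (μ A).toReal := ENNReal.toReal_pos h0 (measure_ne_top μ A)
  have ha1 : (μ A).toReal ≤ 1 := by
    simpa using ENNReal.toReal_mono ENNReal.one_ne_top (prob_le_one (μ := μ) (s := A))
  have hlevel : ∀ t, {x | t < -log (minimalFunction μ A x)} ⊆
      {x | minimalFunction μ A x < exp (-t)} := fun t x (hx : t < -log _) ↦ by
    show minimalFunction μ A x < exp (-t)
    rcases (minimalFunction_nonneg : 0 ≤ minimalFunction μ A x).eq_or_lt with h | h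
    · rw [← h]; exact exp_pos _
    · exact (log_lt_iff_lt_exp h).1 (by linarith)
  have hdist : ∀ t, μ.restrict A {x | t < -log (minimalFunction μ A x)} ≤
      min (ENNReal.ofReal (μ A).toReal) (2 * ENNReal.ofReal (exp (-t))) := fun t ↦ by
    rw [Measure.restrict_apply' hA, ENNReal.ofReal_toReal (measure_ne_top μ A), Set.inter_comm]
    refine le_min (measure_mono inter_subset_left) ?_
    calc μ (A ∩ {x | t < -log (minimalFunction μ A x)})
        ≤ μ (A ∩ {x | minimalFunction μ A x < exp (-t)}) :=
          measure_mono (inter_subset_inter_right A (hlevel t))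
      _ ≤ 2 * ENNReal.ofReal (exp (-t)) * μ univ := measure_inter_setOf_minimalFunction_lt_le hA _
      _ = 2 * ENNReal.ofReal (exp (-t)) := by rw [measure_univ, mul_one]
  rw [lintegral_eq_lintegral_meas_lt _
    (ae_of_all _ fun x ↦ neg_nonneg.2 (log_nonpos minimalFunction_nonneg minimalFunction_le_one))
    upperSemicontinuous_minimalFunction.measurable.log.neg.aemeasurable]
  exact (lintegral_mono hdist).trans
    (lintegral_Ioi_min_two_mul_exp_neg_le ha (ha1.trans one_le_two))

end Estimates

theorem sInf_partition_eq_minimalFunction {α : Type*} [TopologicalSpace α] [LinearOrder α]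
    [MeasurableSpace α] (μ : Measure α) {β : Set (Set α)} (hdisj : β.PairwiseDisjoint id)
    {A : Set α} (hA : A ∈ β) {x : α} (hx : x ∈ A) :
    sInf ({1} ∪ {r : ℝ | ∃ A ∈ β, x ∈ A ∧ ∃ I : Set α, IsOpen I ∧ I.OrdConnected ∧ x ∈ I ∧
      0 < μ I ∧ r = (μ (A ∩ I)).toReal / (μ I).toReal}) = minimalFunction μ A x := by
  rw [minimalFunction]
  congr 2
  ext r
  constructor
  · rintro ⟨A', hA', hxA', hr⟩
    rwa [hdisj.elim hA' hA (not_disjoint_iff.2 ⟨x, hxA', hx⟩)] at hr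
  · exact fun hr ↦ ⟨A, hA, hx, hr⟩

theorem lintegral_eq_tsum_setLIntegral_of_partition {α : Type*} [MeasurableSpace α]
    {μ : Measure α} {β : Set (Set α)} (hctble : β.Countable) (hmeas : ∀ A ∈ β, MeasurableSet A)
    (hdisj : β.PairwiseDisjoint id) (hcov : ⋃₀ β = univ) (f : α → ℝ≥0∞) :
    ∫⁻ x, f x ∂μ = ∑' A : β, ∫⁻ x in A, f x ∂μ := by
  have := hctble.to_subtype
  rw [← lintegral_iUnion (fun A : β ↦ hmeas A A.2)
    (fun A B hAB ↦ hdisj A.2 B.2 (Subtype.coe_injective.ne hAB)), ← sUnion_eq_iUnion, hcov,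
    Measure.restrict_univ]

theorem tsum_measure_eq_of_partition {α : Type*} [MeasurableSpace α]
    {μ : Measure α} {β : Set (Set α)} (hctble : β.Countable) (hmeas : ∀ A ∈ β, MeasurableSet A)
    (hdisj : β.PairwiseDisjoint id) (hcov : ⋃₀ β = univ) :
    ∑' A : β, μ A = μ univ := by
  simpa using (lintegral_eq_tsum_setLIntegral_of_partition (μ := μ) hctble hmeas hdisj hcov 1).symm

end MeasureTheory

theorem ENNReal.tsum_ofReal_mul_sub_mul_log {ι : Type*} {p : ι → ℝ≥0∞} (hp : ∑' i, p i = 1)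
    (hH : Summable fun i ↦ -((p i).toReal * Real.log (p i).toReal)) {c : ℝ} (hc : 0 ≤ c) :
    ∑' i, ENNReal.ofReal ((p i).toReal * c - (p i).toReal * Real.log (p i).toReal) =
      ENNReal.ofReal ((∑' i, -((p i).toReal * Real.log (p i).toReal)) + c) := by
  have hp1 : ∀ i, p i ≤ 1 := fun i ↦ hp ▸ ENNReal.le_tsum i
  have hH0 : ∀ i, 0 ≤ -((p i).toReal * Real.log (p i).toReal) := fun i ↦
    neg_nonneg.2 (mul_nonpos_of_nonneg_of_nonpos toReal_nonneg
      (Real.log_nonpos toReal_nonneg (by simpa using toReal_mono one_ne_top (hp1 i))))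
  calc ∑' i, ENNReal.ofReal ((p i).toReal * c - (p i).toReal * Real.log (p i).toReal)
      = ∑' i, (ENNReal.ofReal (-((p i).toReal * Real.log (p i).toReal)) + p i * ENNReal.ofReal c) :=
        tsum_congr fun i ↦ by
          rw [← neg_add_eq_sub, ofReal_add (hH0 i) (mul_nonneg toReal_nonneg hc),
            ofReal_mul toReal_nonneg, ofReal_toReal (ne_top_of_le_ne_top one_ne_top (hp1 i))]
    _ = ENNReal.ofReal ((∑' i, -((p i).toReal * Real.log (p i).toReal)) + c) := by
        rw [ENNReal.tsum_add, ENNReal.tsum_mul_right, hp, one_mul, ← ofReal_tsum_of_nonneg hH0 hH,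
          ofReal_add (tsum_nonneg hH0) hc]

theorem minimal_function_entropy_bound (μ : Measure ℝ) [IsProbabilityMeasure μ]
    (β : Set (Set ℝ)) (hctble : β.Countable) (hmeas : ∀ A ∈ β, MeasurableSet A)
    (hdisj : β.PairwiseDisjoint id) (hcov : ⋃₀ β = Set.univ)
    (hH : Summable fun A : β => -((μ (A : Set ℝ)).toReal * Real.log (μ (A : Set ℝ)).toReal)) :
    ∫⁻ x, ENNReal.ofReal (-Real.log (sInf ({1} ∪
        {r : ℝ | ∃ A ∈ β, x ∈ A ∧ ∃ I : Set ℝ, IsOpen I ∧ I.OrdConnected ∧ x ∈ I ∧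
          0 < μ I ∧ r = (μ (A ∩ I)).toReal / (μ I).toReal}))) ∂μ
      ≤ ENNReal.ofReal
          ((∑' A : β, -((μ (A : Set ℝ)).toReal * Real.log (μ (A : Set ℝ)).toReal))
            + Real.log 2 + 1) := by
  have hprob : ∑' A : β, μ A = 1 :=
    (tsum_measure_eq_of_partition hctble hmeas hdisj hcov).trans measure_univ
  calc _ = ∑' A : β, ∫⁻ x in A, ENNReal.ofReal (-log (minimalFunction μ A x)) ∂μ := by
        rw [lintegral_eq_tsum_setLIntegral_of_partition hctble hmeas hdisj hcov]
        exact tsum_congr fun A ↦ setLIntegral_congr_fun (hmeas A A.2) fun x hx ↦ by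
          rw [sInf_partition_eq_minimalFunction μ hdisj A.2 hx]
    _ ≤ ∑' A : β, ENNReal.ofReal
          ((μ A).toReal * (log 2 + 1) - (μ A).toReal * log (μ A).toReal) :=
        ENNReal.tsum_le_tsum fun A ↦ setLIntegral_neg_log_minimalFunction_le (hmeas A A.2)
    _ = _ := by
        rw [ENNReal.tsum_ofReal_mul_sub_mul_log hprob hH (by positivity), add_assoc]
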